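/- For the Z4-linear code 𝒞 ⊆ Z4^4 generated by (3,2,1,0) and (2,3,0,1), the permutation ϑ = (1,3,5,7)(2,4,6,8) on binary coordinates belongs to PAut(Φ(𝒞)), and S = {id, ϑ, ϑ²} is a PD-set for the information set I = {5,6,7,8}: for every e ∈ F2^8 with wt(e) ≤ 1 there exists π ∈ S with wt(π(e)_I) = 0. -/
import Mathlib


/-- The ambient group Z2^α × Z4^β. -/
abbrev Vab (α β : ℕ) := (Fin α → ZMod 2) × (Fin β → ZMod 4)

/-- The Gray map φ : Z4 → Z2². -/
def gray (a : ZMod 4) : ZMod 2 × ZMod 2 :=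
  if a = 0 then (0, 0) else if a = 1 then (0, 1) else if a = 2 then (1, 1) else (1, 0)

/-- The componentwise Gray map Φ : Z2^{n1} × Z4^{n2} → F2^{n1+2n2}. -/
def Phi (n1 n2 : ℕ) (u : Vab n1 n2) : Fin (n1 + 2 * n2) → ZMod 2 := fun i =>
  if h : (i : ℕ) < n1 then u.1 ⟨i, h⟩
  else
    have hj : ((i : ℕ) - n1) / 2 < n2 := by have := i.isLt; omega
    if ((i : ℕ) - n1) % 2 = 0 then (gray (u.2 ⟨((i : ℕ) - n1) / 2, hj⟩)).1
    else (gray (u.2 ⟨((i : ℕ) - n1) / 2, hj⟩)).2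

/-- The quaternary linear code 𝒞 ⊆ Z4^4 generated by (3,2,1,0) and (2,3,0,1). -/
def quatCode : Set (Fin 4 → ZMod 4) :=
  {w | ∃ s t : ZMod 4, w = s • ![3, 2, 1, 0] + t • ![2, 3, 0, 1]}

/-- The action of a permutation π ∈ S_n on F2^n: π(v)_i = v_{π⁻¹(i)}. -/
def permAct {n : ℕ} (π : Equiv.Perm (Fin n)) (v : Fin n → ZMod 2) : Fin n → ZMod 2 :=
  fun i => v (π.symm i)

/-- The permutation ϑ = (1,3,5,7)(2,4,6,8) on the 8 binary coordinates,
i.e. the shift i ↦ i + 2 (mod 8). -/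
def theta : Equiv.Perm (Fin (0 + 2 * 4)) := Equiv.addRight 2

/-- The information set I = {5,6,7,8} (one-indexed). -/
def Iset : Fin 4 → Fin (0 + 2 * 4) := fun m => ⟨4 + m.val, by omega⟩

lemma key : ∀ s t : ZMod 4, ∃ s' t' : ZMod 4,
    permAct theta (Phi 0 4 (Fin.elim0, s • ![3,2,1,0] + t • ![2,3,0,1])) =
      Phi 0 4 (Fin.elim0, s' • ![3,2,1,0] + t' • ![2,3,0,1]) := by decide

lemma key' : ∀ s t : ZMod 4, ∃ s' t' : ZMod 4,
    permAct theta⁻¹ (Phi 0 4 (Fin.elim0, s • ![3,2,1,0] + t • ![2,3,0,1])) =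
      Phi 0 4 (Fin.elim0, s' • ![3,2,1,0] + t' • ![2,3,0,1]) := by decide

lemma permAct_mul {n : ℕ} (π σ : Equiv.Perm (Fin n)) (v : Fin n → ZMod 2) :
    permAct (π * σ) v = permAct π (permAct σ v) := rfl

lemma key2 : ∀ e : Fin (0 + 2 * 4) → ZMod 2, hammingNorm e ≤ 1 →
    (∀ m : Fin 4, permAct 1 e (Iset m) = 0) ∨
    (∀ m : Fin 4, permAct theta e (Iset m) = 0) ∨
    (∀ m : Fin 4, permAct (theta ^ 2) e (Iset m) = 0) := by
  set_option maxRecDepth 10000 in decide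

/-- For the Gray image C = Φ(𝒞) of the Z4-linear code 𝒞 generated by (3,2,1,0)
and (2,3,0,1): the permutation ϑ = (1,3,5,7)(2,4,6,8) is in PAut(C), and
S = {id, ϑ, ϑ²} is a PD-set for the information set I = {5,6,7,8}: every error
vector of weight ≤ 1 can be moved out of I by some element of S. -/
theorem hadamard_PD_set :
    let C : Set (Fin (0 + 2 * 4) → ZMod 2) :=
      {v | ∃ w ∈ quatCode, v = Phi 0 4 (Fin.elim0, w)}
    permAct theta '' C = C ∧
      ∀ e : Fin (0 + 2 * 4) → ZMod 2, hammingNorm e ≤ 1 →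
        ∃ π ∈ ({1, theta, theta ^ 2} : Set (Equiv.Perm (Fin (0 + 2 * 4)))),
          ∀ m : Fin 4, permAct π e (Iset m) = 0 := by
  intro C
  constructor
  · ext v
    constructor
    · rintro ⟨u, ⟨w, ⟨s, t, hw⟩, hu⟩, rfl⟩
      subst hw hu
      obtain ⟨s', t', h⟩ := key s t
      exact ⟨_, ⟨s', t', rfl⟩, h⟩
    · rintro ⟨w, ⟨s, t, hw⟩, hv⟩
      subst hw hv
      obtain ⟨s', t', h⟩ := key' s t
      refine ⟨_, ⟨_, ⟨s', t', rfl⟩, rfl⟩, ?_⟩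
      rw [← h, ← permAct_mul, mul_inv_cancel]
      rfl
  · intro e he
    rcases key2 e he with h | h | h
    · exact ⟨1, Or.inl rfl, h⟩
    · exact ⟨theta, Or.inr (Or.inl rfl), h⟩
    · exact ⟨theta ^ 2, Or.inr (Or.inr rfl), h⟩
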